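/- arXiv:1404.7341 — 5 statements merged into one kernel-verified Lean document; each statement's English description precedes it below -/
import Mathlib

section
/- For every monomial ideal I in the polynomial ring S = k[x_0,...,x_n] and every j ≥ 0, the Hilbert function of S/I satisfies (n+j+1)·h_{S/I}(j) ≥ (j+1)·h_{S/I}(j+1). -/
/-!
As a `k`-space, the degree-`j` piece of `S/I` has a basis of standard monomials: those whose
exponent lies outside the upper closure `U` of the generators. The complement of `U` is a lower
set, so removing one `x_i` from a standard monomial `d` of degree `j + 1` with `d i ≠ 0` gives,
injectively, a standard monomial `d - e_i` of degree `j`. Weight each standard `d` of degree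
`j + 1` by `∑ i, d i = j + 1` and charge the part `d i` to `d - e_i`: a standard `d'` of degree
`j` receives at most `∑ i, (d' i + 1) = j + n + 1`.
-/

open Finset

namespace Finsupp

variable {σ : Type*} [Fintype σ]

open Classical in
noncomputable def degreeSlice (S : Set (σ →₀ ℕ)) (j : ℕ) : Finset (σ →₀ ℕ) :=
  {d ∈ finsuppAntidiag univ j | d ∈ S}

variable {S : Set (σ →₀ ℕ)} {j : ℕ}

theorem mem_degreeSlice {d : σ →₀ ℕ} :
    d ∈ degreeSlice S j ↔ d ∈ S ∧ d.degree = j := by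
  simp [degreeSlice, degree_eq_sum, and_comm]

theorem coe_degreeSlice : (degreeSlice S j : Set (σ →₀ ℕ)) =
    S ∩ {d | d.degree = j} :=
  Set.ext fun _ => mem_degreeSlice

theorem sum_apply_degreeSlice_succ_le (hS : IsLowerSet S) (i : σ) :
    ∑ d ∈ degreeSlice S (j + 1), d i ≤ ∑ d ∈ degreeSlice S j, (d i + 1) := by
  classical
  calc ∑ d ∈ degreeSlice S (j + 1), d i
      = ∑ d ∈ degreeSlice S j with d + single i 1 ∈ S, (d i + 1) := by
        -- `d ↦ d + single i 1` hits exactly the exponents of degree `j + 1` with `d i ≠ 0`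
        symm
        refine sum_bij_ne_zero (fun d _ _ => d + single i 1) ?_ ?_ ?_ ?_
        · intro d hd _
          obtain ⟨hd, hdS⟩ := mem_filter.mp hd
          exact mem_degreeSlice.mpr ⟨hdS, by simp [(mem_degreeSlice.mp hd).2]⟩
        · intro _ _ _ _ _ _ h
          exact add_right_cancel h
        · intro d hd hdi
          obtain ⟨hdS, hdeg⟩ := mem_degreeSlice.mp hd
          have hle : single i 1 ≤ d := single_le_iff.mpr (Nat.one_le_iff_ne_zero.mpr hdi)
          have hdeg' := congrArg degree (tsub_add_cancel_of_le hle)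
          rw [map_add, degree_single] at hdeg'
          refine ⟨d - single i 1,
            mem_filter.mpr ⟨mem_degreeSlice.mpr ⟨hS tsub_le_self hdS, by omega⟩, ?_⟩,
            Nat.succ_ne_zero _, tsub_add_cancel_of_le hle⟩
          · rwa [tsub_add_cancel_of_le hle]
        · intro d _ _
          simp
    _ ≤ ∑ d ∈ degreeSlice S j, (d i + 1) := sum_le_sum_of_subset (filter_subset _ _)

theorem succ_mul_card_degreeSlice_succ_le (hS : IsLowerSet S) (j : ℕ) :
    (j + 1) * #(degreeSlice S (j + 1)) ≤ (Fintype.card σ + j) * #(degreeSlice S j) := by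
  have sum_degree (j : ℕ) : ∑ d ∈ degreeSlice S j, ∑ i, d i = #(degreeSlice S j) * j :=
    sum_const_nat fun d hd => by rw [← degree_eq_sum, (mem_degreeSlice.mp hd).2]
  calc (j + 1) * #(degreeSlice S (j + 1))
      = ∑ i, ∑ d ∈ degreeSlice S (j + 1), d i := by rw [Finset.sum_comm, sum_degree, mul_comm]
    _ ≤ ∑ i, ∑ d ∈ degreeSlice S j, (d i + 1) := by
        gcongr with i
        exact sum_apply_degreeSlice_succ_le hS i
    _ = ∑ d ∈ degreeSlice S j, (∑ i, d i + Fintype.card σ) := by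
        rw [Finset.sum_comm]
        simp only [Finset.sum_add_distrib, sum_const, card_univ, smul_eq_mul, mul_one]
    _ = (Fintype.card σ + j) * #(degreeSlice S j) := by
        rw [Finset.sum_add_distrib, sum_degree, sum_const, smul_eq_mul]
        ring

end Finsupp

namespace MvPolynomial

variable {σ R : Type*}

theorem mem_ideal_span_monomial_image_iff_support_subset [CommSemiring R]
    {x : MvPolynomial σ R} {s : Set (σ →₀ ℕ)} :
    x ∈ Ideal.span ((fun s => monomial s (1 : R)) '' s) ↔
      (x.support : Set (σ →₀ ℕ)) ⊆ upperClosure s := by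
  simp only [mem_ideal_span_monomial_image, Set.subset_def, SetLike.mem_coe,
    mem_upperClosure]

variable [CommRing R] {G : Set (σ →₀ ℕ)}

theorem map_mk_restrictSupport_eq_diff_upperClosure (T : Set (σ →₀ ℕ)) :
    (restrictSupport R T).map
        (Ideal.Quotient.mkₐ R (Ideal.span ((fun d => monomial d (1 : R)) '' G))).toLinearMap =
      (restrictSupport R (T \ upperClosure G)).map
        (Ideal.Quotient.mkₐ R (Ideal.span ((fun d => monomial d (1 : R)) '' G))).toLinearMap := by
  refine le_antisymm ?_ (Submodule.map_mono (restrictSupport_mono R Set.sdiff_subset))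
  rw [restrictSupport_eq_span, Submodule.map_span_le]
  rintro _ ⟨d, hdT, rfl⟩
  by_cases hdG : d ∈ upperClosure G
  · convert Submodule.zero_mem _
    rw [AlgHom.toLinearMap_apply, Ideal.Quotient.mkₐ_eq_mk, Ideal.Quotient.eq_zero_iff_mem,
      mem_ideal_span_monomial_image_iff_support_subset]
    intro e he
    rwa [Finset.mem_singleton.mp (support_monomial_subset he)]
  · exact Submodule.mem_map_of_mem (restrictSupport_eq_span (R := R) _ ▸
      Submodule.subset_span ⟨d, ⟨hdT, hdG⟩, rfl⟩)

theorem disjoint_restrictSupport_ker_mk {T : Set (σ →₀ ℕ)}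
    (hT : Disjoint T (upperClosure G)) :
    Disjoint (restrictSupport R T) (LinearMap.ker
      (Ideal.Quotient.mkₐ R (Ideal.span ((fun d => monomial d (1 : R)) '' G))).toLinearMap) := by
  rw [Submodule.disjoint_def]
  intro p hpT hpG
  rw [LinearMap.mem_ker, AlgHom.toLinearMap_apply, Ideal.Quotient.mkₐ_eq_mk,
    Ideal.Quotient.eq_zero_iff_mem, mem_ideal_span_monomial_image_iff_support_subset] at hpG
  rw [← support_eq_empty]
  exact Finset.eq_empty_of_forall_notMem fun d hd => Set.disjoint_left.mp hT (hpT hd) (hpG hd)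

theorem finrank_map_mk_restrictSupport [Nontrivial R] {F : Finset (σ →₀ ℕ)}
    (hF : Disjoint (F : Set (σ →₀ ℕ)) (upperClosure G)) :
    Module.finrank R ((restrictSupport R (F : Set (σ →₀ ℕ))).map
        (Ideal.Quotient.mkₐ R (Ideal.span ((fun d => monomial d (1 : R)) '' G))).toLinearMap) =
      #F := by
  rw [← LinearMap.range_domRestrict, LinearMap.finrank_range_of_inj,
    Module.finrank_eq_nat_card_basis (basisRestrictSupport R _), Nat.card_coe_set_eq,
    Set.ncard_coe_finset]
  rw [LinearMap.injective_domRestrict_iff]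
  exact disjoint_restrictSupport_ker_mk hF

theorem finrank_map_mk_homogeneousSubmodule [Fintype σ] [Nontrivial R] (j : ℕ) :
    Module.finrank R ((homogeneousSubmodule σ R j).map
        (Ideal.Quotient.mkₐ R (Ideal.span ((fun d => monomial d (1 : R)) '' G))).toLinearMap) =
      #(Finsupp.degreeSlice (upperClosure G : Set (σ →₀ ℕ))ᶜ j) := by
  have hslice : {d : σ →₀ ℕ | d.degree = j} \ upperClosure G =
      Finsupp.degreeSlice (upperClosure G : Set (σ →₀ ℕ))ᶜ j := by
    rw [Finsupp.coe_degreeSlice, Set.sdiff_eq, Set.inter_comm]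
  rw [homogeneousSubmodule_eq_finsupp_supported, ← restrictSupport,
    map_mk_restrictSupport_eq_diff_upperClosure, hslice]
  exact finrank_map_mk_restrictSupport
    (Set.disjoint_left.mpr fun _ hd => (Finsupp.mem_degreeSlice.mp hd).1)

end MvPolynomial

/-- For every monomial ideal `I` in `S = k[x_0,...,x_n]` and every `j ≥ 0`, the Hilbert
function of `S/I` satisfies `(n+j+1)·h_{S/I}(j) ≥ (j+1)·h_{S/I}(j+1)`, where the Hilbert
function is the dimension over `k` of the degree-`j` graded piece of `S/I`. -/
theorem macaulay_linear_inequality_for_monomial_ideals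
    (k : Type) [Field k] (n : ℕ) (I : Ideal (MvPolynomial (Fin (n + 1)) k))
    (hI : ∃ G : Set (Fin (n + 1) →₀ ℕ),
      I = Ideal.span ((fun d => (MvPolynomial.monomial d (1 : k))) '' G))
    (j : ℕ) :
    (j + 1) * Module.finrank k
        ((MvPolynomial.homogeneousSubmodule (Fin (n + 1)) k (j + 1)).map
          (Ideal.Quotient.mkₐ k I).toLinearMap)
      ≤ (n + j + 1) * Module.finrank k
        ((MvPolynomial.homogeneousSubmodule (Fin (n + 1)) k j).map
          (Ideal.Quotient.mkₐ k I).toLinearMap) := by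
  obtain ⟨G, rfl⟩ := hI
  rw [MvPolynomial.finrank_map_mk_homogeneousSubmodule,
    MvPolynomial.finrank_map_mk_homogeneousSubmodule]
  have := Finsupp.succ_mul_card_degreeSlice_succ_le (upperClosure G).upper.compl j
  rwa [Fintype.card_fin, add_right_comm] at this
end

section
/- For 0 ≤ ℓ ≤ n+1 and i ≥ 1, the Hilbert series of M = S/⟨x_0,...,x_{ℓ-1}⟩^i, where S = k[x_0,...,x_n], equals (1-t)^{ℓ-1-n} · Σ_{k=0}^{i-1} C(ℓ-1+k, k) t^k. -/
/-!
The ideal `⟨x_0, …, x_{ℓ-1}⟩^i` is spanned by the monomials whose degree in the first `ℓ`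
variables is at least `i`, so the degree-`j` part of the quotient has as a basis the monomials of
degree `j` whose degree in the first `ℓ` variables is below `i`. Splitting such a monomial into
its parts in the first `ℓ` and in the remaining `n + 1 - ℓ` variables, their number is
`∑_{p + q = j, q < i} multichoose (n + 1 - ℓ) p * multichoose ℓ q`, which is the coefficient
of `t^j` on the right because `(1 - t)^{-e} = ∑_p multichoose e p * t^p`.
-/

open Finset Module

namespace MvPolynomial

variable {σ R : Type*}

section CommSemiring

variable [CommSemiring R]

theorem monomial_one_mem_pow_span_X_image (s : Finset σ) (d : σ →₀ ℕ) :
    monomial d (1 : R) ∈ Ideal.span (X '' ↑s) ^ (∑ x ∈ s, d x) := by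
  classical
  induction d using Finsupp.induction with
  | zero => simp
  | single_add x k d _ _ ih =>
    simp only [monomial_single_add, Finsupp.coe_add, Pi.add_apply, sum_add_distrib,
      Finsupp.single_apply, sum_ite_eq]
    split_ifs with hx
    · rw [pow_add]
      exact Ideal.mul_mem_mul
        (Ideal.pow_mem_pow (Ideal.subset_span (Set.mem_image_of_mem X hx)) k) ih
    · simpa using Ideal.mul_mem_left _ _ ih

theorem pow_span_X_image_eq_span_monomial (s : Finset σ) (m : ℕ) :
    Ideal.span (X '' ↑s : Set (MvPolynomial σ R)) ^ m =
      Ideal.span ((monomial · 1) '' {d | m ≤ ∑ x ∈ s, d x}) := by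
  classical
  refine le_antisymm ?_ (Ideal.span_le.mpr ?_)
  · induction m with
    | zero =>
      rw [pow_zero, Ideal.one_eq_top, top_le_iff, Ideal.eq_top_iff_one]
      exact Ideal.subset_span ⟨0, by simp, by simp⟩
    | succ m ih =>
      grw [pow_succ, ih, Ideal.span_mul_span']
      refine Ideal.span_mono ?_
      rintro _ ⟨_, ⟨d, hd, rfl⟩, _, ⟨x, hx, rfl⟩, rfl⟩
      refine ⟨d + Finsupp.single x 1, ?_, by simp [X, monomial_mul]⟩
      simpa [sum_add_distrib, Finsupp.single_apply, mem_coe.mp hx] using hd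
  · rintro _ ⟨d, hd, rfl⟩
    exact Ideal.pow_le_pow_right hd (monomial_one_mem_pow_span_X_image s d)

theorem mem_pow_span_X_image_iff {s : Finset σ} {m : ℕ} {f : MvPolynomial σ R} :
    f ∈ Ideal.span (X '' ↑s) ^ m ↔ ∀ d ∈ f.support, m ≤ ∑ x ∈ s, d x := by
  rw [pow_span_X_image_eq_span_monomial, mem_ideal_span_monomial_image]
  refine forall₂_congr fun d _ => ⟨fun ⟨e, he, hed⟩ => ?_, fun hd => ⟨d, hd, le_rfl⟩⟩
  exact he.trans (sum_le_sum fun x _ => hed x)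

variable (R)

theorem restrictSupport_union (s t : Set (σ →₀ ℕ)) :
    restrictSupport R (s ∪ t) = restrictSupport R s ⊔ restrictSupport R t := by
  simp only [restrictSupport, AddMonoidAlgebra.supported_eq_map, Finsupp.supported_union,
    Submodule.map_sup]

theorem disjoint_restrictSupport {s t : Set (σ →₀ ℕ)} (h : Disjoint s t) :
    Disjoint (restrictSupport R s) (restrictSupport R t) := by
  refine Submodule.disjoint_def.mpr fun f hs ht => ?_
  rw [← support_eq_empty, ← coe_eq_empty]
  exact disjoint_self.mp (h.mono hs ht)

end CommSemiring

theorem ker_mkₐ_pow_span_X_image [CommRing R] (s : Finset σ) (m : ℕ) :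
    LinearMap.ker (Ideal.Quotient.mkₐ R (Ideal.span (X '' ↑s) ^ m)).toLinearMap =
      restrictSupport R {d | m ≤ ∑ x ∈ s, d x} := by
  ext f
  simp [Ideal.Quotient.eq_zero_iff_mem, mem_pow_span_X_image_iff, mem_restrictSupport_iff,
    Set.subset_def]

end MvPolynomial

theorem Submodule.finrank_map_eq_of_disjoint_ker {R V W : Type*} [Ring R] [AddCommGroup V]
    [Module R V] [AddCommGroup W] [Module R W] {p : Submodule R V} {f : V →ₗ[R] W}
    (h : Disjoint p (LinearMap.ker f)) : finrank R (p.map f) = finrank R p :=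
  (LinearEquiv.ofBijective (f.submoduleMap p)
    ⟨LinearMap.submoduleMap_injective_of_injOn (LinearMap.disjoint_ker_iff_injOn.mp h),
      f.submoduleMap_surjective p⟩).finrank_eq.symm

theorem MvPolynomial.finrank_map_restrictSupport {σ K M : Type*} [Field K] [AddCommGroup M]
    [Module K M] (π : MvPolynomial σ K →ₗ[K] M) {B C : Set (σ →₀ ℕ)}
    (hker : LinearMap.ker π = restrictSupport K C) :
    finrank K ((restrictSupport K B).map π) = Nat.card ↥(B \ C) := by
  have hB : restrictSupport K B = restrictSupport K (B \ C) ⊔ restrictSupport K (B ∩ C) := by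
    rw [← restrictSupport_union, Set.sdiff_union_inter]
  have hBC : (restrictSupport K (B ∩ C)).map π = ⊥ := by
    rw [eq_bot_iff, Submodule.map_le_iff_le_comap, Submodule.comap_bot, hker]
    exact restrictSupport_mono K Set.inter_subset_right
  have hdisj : Disjoint (restrictSupport K (B \ C)) (LinearMap.ker π) :=
    hker ▸ disjoint_restrictSupport K Set.disjoint_sdiff_left
  rw [hB, Submodule.map_sup, hBC, sup_bot_eq, Submodule.finrank_map_eq_of_disjoint_ker hdisj,
    finrank_eq_nat_card_basis (basisRestrictSupport K _)]

namespace Finset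

variable {σ : Type*} [DecidableEq σ]

theorem filter_mem_finsuppAntidiag_sum (d : σ →₀ ℕ) (t : Finset σ) :
    d.filter (· ∈ t) ∈ t.finsuppAntidiag (∑ x ∈ t, d x) :=
  mem_finsuppAntidiag.mpr ⟨sum_congr rfl fun _ hx => Finsupp.filter_apply_pos (· ∈ t) d hx,
    fun _ hx => (mem_filter.mp (by rwa [Finsupp.support_filter] at hx)).2⟩

variable [Fintype σ]

theorem sum_apply_eq_zero_of_support_subset_compl {d : σ →₀ ℕ} {s : Finset σ}
    (h : d.support ⊆ sᶜ) : ∑ x ∈ s, d x = 0 :=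
  sum_eq_zero fun _ hx => Finsupp.notMem_support_iff.mp fun hd => mem_compl.mp (h hd) hx

theorem card_filter_finsuppAntidiag_sum_compl_sum (s : Finset σ) (p q : ℕ) :
    #{d ∈ univ.finsuppAntidiag (p + q) | (∑ x ∈ sᶜ, d x, ∑ x ∈ s, d x) = (p, q)} =
      (#sᶜ).multichoose p * (#s).multichoose q := by
  rw [← card_finsuppAntidiag_nat_eq_multichoose, ← card_finsuppAntidiag_nat_eq_multichoose,
    ← card_product]
  refine card_nbij' (fun d => (d.filter (· ∈ sᶜ), d.filter (· ∈ s))) (fun ab => ab.1 + ab.2)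
    ?_ ?_ ?_ ?_
  · intro d hd
    simp only [coe_filter, mem_finsuppAntidiag, Prod.mk.injEq, Set.mem_ofPred_eq] at hd
    obtain ⟨-, hp, hq⟩ := hd
    exact mk_mem_product (hp ▸ filter_mem_finsuppAntidiag_sum d sᶜ)
      (hq ▸ filter_mem_finsuppAntidiag_sum d s)
  · rintro ⟨a, b⟩ hab
    simp only [coe_product, Set.mem_prod, mem_coe, mem_finsuppAntidiag] at hab
    obtain ⟨⟨rfl, ha⟩, rfl, hb⟩ := hab
    have ha0 : ∑ x ∈ s, a x = 0 := sum_apply_eq_zero_of_support_subset_compl ha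
    have hb0 : ∑ x ∈ sᶜ, b x = 0 :=
      sum_apply_eq_zero_of_support_subset_compl (by rwa [compl_compl])
    simp only [coe_filter, mem_finsuppAntidiag, Prod.mk.injEq, Set.mem_ofPred_eq, Finsupp.coe_add,
      Pi.add_apply, sum_add_distrib, ha0, hb0, ← sum_add_sum_compl s, zero_add, add_zero]
    exact ⟨⟨add_comm _ _, subset_univ _⟩, trivial, trivial⟩
  · intro d _
    change d.filter _ + d.filter _ = d
    rw [add_comm]
    simpa only [mem_compl] using d.filter_add_filter_not (· ∈ s)
  · rintro ⟨a, b⟩ hab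
    simp only [coe_product, Set.mem_prod, mem_coe, mem_finsuppAntidiag] at hab
    obtain ⟨⟨-, ha⟩, -, hb⟩ := hab
    have ha0 : ∀ x ∈ s, a x = 0 := fun x hx =>
      Finsupp.notMem_support_iff.mp fun h => mem_compl.mp (ha h) hx
    have hb0 : ∀ x ∉ s, b x = 0 := fun x hx => Finsupp.notMem_support_iff.mp fun h => hx (hb h)
    ext x <;> by_cases hx : x ∈ s <;> simp [hx, ha0, hb0]

theorem card_filter_finsuppAntidiag_sum_lt (s : Finset σ) (i j : ℕ) :
    #{d ∈ univ.finsuppAntidiag j | ∑ x ∈ s, d x < i} =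
      ∑ pq ∈ antidiagonal j,
        if pq.2 < i then (#sᶜ).multichoose pq.1 * (#s).multichoose pq.2 else 0 := by
  rw [card_eq_sum_card_fiberwise (f := fun d => (∑ x ∈ sᶜ, d x, ∑ x ∈ s, d x))
    (t := antidiagonal j) fun d hd => ?_]
  · refine sum_congr rfl fun pq hpq => ?_
    rw [filter_filter]
    split_ifs with hi
    · rw [← HasAntidiagonal.mem_antidiagonal.mp hpq,
        ← card_filter_finsuppAntidiag_sum_compl_sum]
      refine congrArg card (filter_congr fun d _ => and_iff_right_of_imp fun h => ?_)
      rwa [← (Prod.ext_iff.mp h).2] at hi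
    · refine card_eq_zero.mpr (filter_eq_empty_iff.mpr fun d _ ⟨hlt, h⟩ => hi ?_)
      rwa [← (Prod.ext_iff.mp h).2]
  · simp only [coe_filter, mem_finsuppAntidiag, Set.mem_ofPred_eq] at hd
    rw [mem_coe, HasAntidiagonal.mem_antidiagonal, sum_compl_add_sum, hd.1.1]

end Finset

theorem Ring.choose_natCast_sub_one_add {R : Type*} [Ring R] [BinomialRing R] (ℓ m : ℕ) :
    Ring.choose ((ℓ : R) - 1 + m) m = ℓ.multichoose m := by
  rcases Nat.eq_zero_or_pos (ℓ + m) with h | h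
  · obtain ⟨rfl, rfl⟩ : ℓ = 0 ∧ m = 0 := by omega
    simp
  · rw [Nat.multichoose_eq, ← Ring.choose_natCast, Nat.cast_sub h]
    congr 1
    push_cast
    abel

namespace PowerSeries

theorem inv_one_sub_X {K : Type*} [Field K] : (1 - X : K⟦X⟧)⁻¹ = mk 1 :=
  (inv_eq_iff_mul_eq_one (by simp)).mpr (mk_one_mul_one_sub_eq_one K)

theorem coeff_inv_one_sub_X_pow {K : Type*} [Field K] (e n : ℕ) :
    coeff n (((1 - X : K⟦X⟧)⁻¹) ^ e) = e.multichoose n := by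
  rw [inv_one_sub_X]
  cases e with
  | zero => cases n <;> simp [coeff_one]
  | succ e =>
    rw [mk_one_pow_eq_mk_choose_add, coeff_mk, Nat.multichoose_eq, Nat.add_right_comm,
      Nat.add_sub_cancel, Nat.choose_symm_add]

theorem coeff_sum_range_C_mul_X_pow {R : Type*} [Semiring R] (c : ℕ → R) (i n : ℕ) :
    coeff n (∑ m ∈ range i, C (c m) * X ^ m) = if n < i then c n else 0 := by
  simp [map_sum]

end PowerSeries

namespace MvPolynomial

variable {σ K : Type*} [Fintype σ] [DecidableEq σ] [Field K]

theorem finrank_map_homogeneousSubmodule_mkₐ_pow_span_X_image (s : Finset σ) (i j : ℕ) :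
    finrank K ((homogeneousSubmodule σ K j).map
        (Ideal.Quotient.mkₐ K (Ideal.span (X '' ↑s) ^ i)).toLinearMap) =
      #{d ∈ univ.finsuppAntidiag j | ∑ x ∈ s, d x < i} := by
  have hset : {d : σ →₀ ℕ | d.degree = j} \ {d | i ≤ ∑ x ∈ s, d x} =
      ↑({d ∈ univ.finsuppAntidiag j | ∑ x ∈ s, d x < i} : Finset (σ →₀ ℕ)) := by
    ext d
    simp [Finsupp.degree_eq_sum]
  rw [homogeneousSubmodule_eq_finsupp_supported, ← restrictSupport,
    finrank_map_restrictSupport _ (ker_mkₐ_pow_span_X_image s i), hset, Nat.card_coe_set_eq,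
    Set.ncard_coe_finset]

theorem hilbertSeries_quotient_pow_span_X_image {F : Type*} [Field F] (s : Finset σ) (i : ℕ) :
    (PowerSeries.mk fun j => (finrank K ((homogeneousSubmodule σ K j).map
        (Ideal.Quotient.mkₐ K (Ideal.span (X '' ↑s) ^ i)).toLinearMap) : F)) =
      ((1 - PowerSeries.X : PowerSeries F)⁻¹) ^ #sᶜ *
        ∑ m ∈ range i, PowerSeries.C ((#s).multichoose m : F) * PowerSeries.X ^ m := by
  ext j
  rw [PowerSeries.coeff_mk, finrank_map_homogeneousSubmodule_mkₐ_pow_span_X_image,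
    card_filter_finsuppAntidiag_sum_lt, PowerSeries.coeff_mul, Nat.cast_sum]
  refine sum_congr rfl fun pq _ => ?_
  rw [PowerSeries.coeff_inv_one_sub_X_pow, PowerSeries.coeff_sum_range_C_mul_X_pow]
  split_ifs <;> simp

end MvPolynomial

theorem hilbert_series_of_power_of_linear_ideal_general
    (k : Type) [Field k] (n ℓ i : ℕ) (hℓ : ℓ ≤ n + 1) :
    (PowerSeries.mk fun j => (Module.finrank k
        ((MvPolynomial.homogeneousSubmodule (Fin (n + 1)) k j).map
          (Ideal.Quotient.mkₐ k
            ((Ideal.span ((MvPolynomial.X : Fin (n + 1) → MvPolynomial (Fin (n + 1)) k) ''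
              {x : Fin (n + 1) | (x : ℕ) < ℓ})) ^ i)).toLinearMap) : ℚ))
      = ((1 - PowerSeries.X : PowerSeries ℚ)⁻¹) ^ (n + 1 - ℓ)
          * ∑ m ∈ Finset.range i,
              PowerSeries.C (R := ℚ) (Ring.choose ((ℓ : ℚ) - 1 + m) m) * PowerSeries.X ^ m := by
  have hs : {x : Fin (n + 1) | (x : ℕ) < ℓ} = ↑({x | (x : ℕ) < ℓ} : Finset (Fin (n + 1))) := by
    simp
  have hcard : #({x | (x : ℕ) < ℓ} : Finset (Fin (n + 1))) = ℓ := by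
    simp [Fin.card_filter_val_lt, hℓ]
  rw [hs, MvPolynomial.hilbertSeries_quotient_pow_span_X_image, card_compl, hcard,
    Fintype.card_fin]
  simp_rw [Ring.choose_natCast_sub_one_add]

/-- For `0 ≤ ℓ ≤ n+1` and `i ≥ 1`, the Hilbert series of `M = S/⟨x_0,...,x_{ℓ-1}⟩^i`,
where `S = k[x_0,...,x_n]`, equals `(1-t)^{ℓ-1-n} · Σ_{k=0}^{i-1} C(ℓ-1+k, k) t^k`,
written here as `((1-t)⁻¹)^{n+1-ℓ} · Σ_{k=0}^{i-1} C(ℓ-1+k, k) t^k` in `ℚ⟦t⟧`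
(using the generalized binomial coefficient `C(ℓ-1+k, k)`). -/
theorem hilbert_series_of_power_of_linear_ideal
    (k : Type) [Field k] (n ℓ i : ℕ) (hℓ : ℓ ≤ n + 1) (hi : 1 ≤ i) :
    (PowerSeries.mk fun j => (Module.finrank k
        ((MvPolynomial.homogeneousSubmodule (Fin (n + 1)) k j).map
          (Ideal.Quotient.mkₐ k
            ((Ideal.span ((MvPolynomial.X : Fin (n + 1) → MvPolynomial (Fin (n + 1)) k) ''
              {x : Fin (n + 1) | (x : ℕ) < ℓ})) ^ i)).toLinearMap) : ℚ))
      = ((1 - PowerSeries.X : PowerSeries ℚ)⁻¹) ^ (n + 1 - ℓ)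
          * ∑ m ∈ Finset.range i,
              PowerSeries.C (R := ℚ) (Ring.choose ((ℓ : ℚ) - 1 + m) m) * PowerSeries.X ^ m :=
  hilbert_series_of_power_of_linear_ideal_general k n ℓ i hℓ
end

section
/- Applying the operator T = (n+1)·id - (1-t)·d/dt to the power series (1-t)^{ℓ-1-n} · Σ_{k=0}^{i-1} C(ℓ-1+k,k) t^k yields i·C(ℓ-1+i, i) · t^{i-1} · (1-t)^{ℓ-1-n}, for 0 ≤ ℓ ≤ n+1 and i ≥ 1. -/
/-!
Write `T_c = c·id - (1-t)·D`. Since `(1-t)·D((1-t)^z) = -z·(1-t)^z`, conjugating by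
`(1-t)^z` with `z = ℓ-1-n` turns `T_{n+1}` into `T_ℓ`, so it suffices to apply `T_ℓ` to the
partial sum `Σ_{k<i} C(ℓ-1+k,k) t^k` of `(1-t)^{-ℓ}`. By the absorption identity
`(k+1)·C(r+1,k+1) = (r+1)·C(r,k)`, `T_ℓ` sends its `k`-th term to `g(k+1) - g(k)` with
`g(k) = k·C(ℓ-1+k,k)·t^{k-1}`, and the sum telescopes to `g(i)`.
-/

open Finset

theorem Ring.succ_nsmul_choose_succ_succ {R : Type*} [NonAssocRing R] [Pow R ℕ] [BinomialRing R]
    [NatPowAssoc R] (r : R) (k : ℕ) :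
    (k + 1) • Ring.choose (r + 1) (k + 1) = (r + 1) * Ring.choose r k := by
  simpa using Ring.choose_smul_choose (r + 1) (Nat.le_add_left 1 k)

theorem Derivation.smul_leibniz_zpow {R K M : Type*} [CommRing R] [Field K] [AddCommGroup M]
    [Module K M] [Module R M] [Algebra R K] (D : Derivation R K M) (a : K) (n : ℤ) :
    a • D (a ^ n) = n • a ^ n • D a := by
  rcases eq_or_ne a 0 with rfl | ha
  · rcases eq_or_ne n 0 with rfl | hn
    · simp
    · simp [zero_zpow n hn]
  · rw [D.leibniz_zpow, smul_comm, smul_smul, ← zpow_one_add₀ ha, add_sub_cancel]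

theorem Derivation.map_ratCast {K M : Type*} [Field K] [Algebra ℚ K] [AddCommMonoid M]
    [Module K M] [Module ℚ M] (D : Derivation ℚ K M) (q : ℚ) : D (q : K) = 0 := by
  rw [← eq_ratCast (algebraMap ℚ K) q]
  exact D.map_algebraMap q

section

variable {K : Type*} [Field K] [CharZero K] [Algebra ℚ K] (D : Derivation ℚ K K) {x : K}

theorem choose_mul_pow_telescope (hD : D x = 1) (r : ℚ) (m : ℕ) :
    ((r + 1 : ℚ) : K) * ((Ring.choose (r + m) m : ℚ) * x ^ m)
        - (1 - x) * D ((Ring.choose (r + m) m : ℚ) * x ^ m)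
      = (((m + 1 : ℕ) * Ring.choose (r + (m + 1 : ℕ)) (m + 1) : ℚ) : K) * x ^ m
        - ((m * Ring.choose (r + m) m : ℚ) : K) * x ^ (m - 1) := by
  have absorb : ((m + 1 : ℕ) * Ring.choose (r + (m + 1 : ℕ)) (m + 1) : ℚ)
      = (r + m + 1) * Ring.choose (r + m) m := by
    rw [← nsmul_eq_mul, Nat.cast_succ, ← add_assoc, Ring.succ_nsmul_choose_succ_succ]
  rw [absorb, Derivation.leibniz, D.map_ratCast, smul_zero, add_zero, Derivation.leibniz_pow, hD]
  rcases m with _ | j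
  · simp
  · simp only [nsmul_eq_mul, smul_eq_mul, Nat.add_sub_cancel, pow_succ]
    push_cast
    ring

theorem sum_choose_mul_pow_derivation (hD : D x = 1) (r : ℚ) (i : ℕ) :
    ((r + 1 : ℚ) : K) * (∑ m ∈ range i, (Ring.choose (r + m) m : ℚ) * x ^ m)
        - (1 - x) * D (∑ m ∈ range i, (Ring.choose (r + m) m : ℚ) * x ^ m)
      = ((i * Ring.choose (r + i) i : ℚ) : K) * x ^ (i - 1) := by
  rw [map_sum, mul_sum, mul_sum, ← sum_sub_distrib]
  simp only [choose_mul_pow_telescope D hD]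
  simpa using sum_range_sub (fun k : ℕ ↦ ((k * Ring.choose (r + k) k : ℚ) : K) * x ^ (k - 1)) i

theorem one_sub_zpow_mul_derivation (hD : D x = 1) (c : ℚ) (z : ℤ) (S : K) :
    (c : K) * ((1 - x) ^ z * S) - (1 - x) * D ((1 - x) ^ z * S)
      = (1 - x) ^ z * (((c + z : ℚ) : K) * S - (1 - x) * D S) := by
  have hpow : (1 - x) * D ((1 - x) ^ z) = -z * (1 - x) ^ z := by
    simpa [hD, zsmul_eq_mul] using D.smul_leibniz_zpow (1 - x) z
  rw [Derivation.leibniz, smul_eq_mul, smul_eq_mul]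
  push_cast
  linear_combination (-S) * hpow

end

theorem T_of_hilbert_series_of_power_of_linear_ideal_general
    (n ℓ i : ℕ)
    (D : Derivation ℚ (RatFunc ℚ) (RatFunc ℚ)) (hD : D RatFunc.X = 1)
    (F : RatFunc ℚ)
    (hF : F = (1 - RatFunc.X : RatFunc ℚ) ^ ((ℓ : ℤ) - 1 - n)
        * ∑ m ∈ Finset.range i, RatFunc.C (Ring.choose ((ℓ : ℚ) - 1 + m) m)
            * RatFunc.X ^ m) :
    ((n : ℚ) + 1) • F - (1 - RatFunc.X) * D F
      = (i : ℚ) • (RatFunc.C (Ring.choose ((ℓ : ℚ) - 1 + i) i) * RatFunc.X ^ (i - 1)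
          * (1 - RatFunc.X : RatFunc ℚ) ^ ((ℓ : ℤ) - 1 - n)) := by
  have hexp : (n : ℚ) + 1 + (((ℓ : ℤ) - 1 - n : ℤ) : ℚ) = (ℓ : ℚ) - 1 + 1 := by
    push_cast
    ring
  simp only [RatFunc.smul_eq_C_mul, eq_ratCast RatFunc.C] at hF ⊢
  rw [hF, one_sub_zpow_mul_derivation D hD, hexp, sum_choose_mul_pow_derivation D hD]
  push_cast
  ring

/-- For `0 ≤ ℓ ≤ n+1` and `i ≥ 1`, applying the operator `T = (n+1)·id - (1-t)·d/dt`
(with `d/dt` the unique `ℚ`-derivation `D` of `ℚ(t)` satisfying `D t = 1`) to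
`(1-t)^{ℓ-1-n} · Σ_{k=0}^{i-1} C(ℓ-1+k,k) t^k` yields
`i·C(ℓ-1+i, i) · t^{i-1} · (1-t)^{ℓ-1-n}`. -/
theorem T_of_hilbert_series_of_power_of_linear_ideal
    (n ℓ i : ℕ) (hℓ : ℓ ≤ n + 1) (hi : 1 ≤ i)
    (D : Derivation ℚ (RatFunc ℚ) (RatFunc ℚ)) (hD : D RatFunc.X = 1)
    (F : RatFunc ℚ)
    (hF : F = (1 - RatFunc.X : RatFunc ℚ) ^ ((ℓ : ℤ) - 1 - n)
        * ∑ m ∈ Finset.range i, RatFunc.C (Ring.choose ((ℓ : ℚ) - 1 + m) m)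
            * RatFunc.X ^ m) :
    ((n : ℚ) + 1) • F - (1 - RatFunc.X) * D F
      = (i : ℚ) • (RatFunc.C (Ring.choose ((ℓ : ℚ) - 1 + i) i) * RatFunc.X ^ (i - 1)
          * (1 - RatFunc.X : RatFunc ℚ) ^ ((ℓ : ℤ) - 1 - n)) :=
  T_of_hilbert_series_of_power_of_linear_ideal_general n ℓ i D hD F hF
end

section
/- Any polynomial f ∈ ℚ[s] of degree r with r distinct negative integer roots and positive leading coefficient is a nonnegative ℚ-linear combination of the polynomials C(s+k, k) = (s+1)(s+2)···(s+k)/k! for 0 ≤ k ≤ r. -/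
/-!
Write `P k = (X + 1)(X + 2)⋯(X + k)`, so that `C(X + k, k) = P k / k!`. The identity
`(X + m) * P k = P (k + 1) + (m - k - 1) * P k` shows that multiplying by `X + m` maps the cone
spanned by `P 0, …, P n` into the cone spanned by `P 0, …, P (n + 1)` as soon as `m ≥ n + 1`.
Multiplying in the linear factors `X + a` in increasing order of the roots keeps this condition
satisfied: distinct integers `1 ≤ a₁ < ⋯ < aⱼ` have `aⱼ ≥ j`.
-/

open Polynomial Finset

namespace Polynomial

section CommRing

variable (R : Type*) [CommRing R]

noncomputable def risingProd (k : ℕ) : R[X] :=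
  ∏ t ∈ range k, (X + C ((t : R) + 1))

variable {R}

theorem X_add_C_mul_risingProd (m : R) (k : ℕ) :
    (X + C m) * risingProd R k = risingProd R (k + 1) + C (m - k - 1) * risingProd R k := by
  rw [risingProd, risingProd, prod_range_succ]
  simp only [C_sub, C_add, C_1, map_natCast]
  ring

end CommRing

section OrderedCommRing

variable (R : Type*) [CommRing R] [PartialOrder R] [IsOrderedRing R]

noncomputable def risingCone (n : ℕ) : PointedCone R R[X] :=
  PointedCone.hull R (Set.range fun k : Fin (n + 1) => risingProd R k)

variable {R}

theorem risingProd_mem_risingCone {k n : ℕ} (h : k ≤ n) : risingProd R k ∈ risingCone R n :=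
  PointedCone.subset_hull ⟨⟨k, Nat.lt_succ_of_le h⟩, rfl⟩

theorem risingCone_le_succ (n : ℕ) : risingCone R n ≤ risingCone R (n + 1) :=
  Submodule.span_le.mpr <| by
    rintro _ ⟨k, rfl⟩
    exact risingProd_mem_risingCone (Nat.le_succ_of_le (Fin.is_le k))

theorem X_add_C_mul_mem_risingCone_succ {m : R} {n : ℕ} (hm : (n : R) + 1 ≤ m) {p : R[X]}
    (hp : p ∈ risingCone R n) : (X + C m) * p ∈ risingCone R (n + 1) := by
  induction hp using Submodule.span_induction with
  | mem _ h =>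
    obtain ⟨k, rfl⟩ := h
    have hcoef : 0 ≤ m - k - 1 := by
      rw [sub_sub, sub_nonneg]
      exact (add_le_add_left (Nat.mono_cast (Fin.is_le k)) 1).trans hm
    rw [X_add_C_mul_risingProd, ← smul_eq_C_mul]
    exact add_mem (risingProd_mem_risingCone (Nat.succ_le_succ (Fin.is_le k)))
      (PointedCone.smul_mem _ hcoef
        (risingCone_le_succ n (risingProd_mem_risingCone (Fin.is_le k))))
  | zero => simp
  | add p q _ _ hp hq => simpa [mul_add] using add_mem hp hq
  | smul a p _ hp => simpa [mul_smul_comm] using Submodule.smul_mem _ a hp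

theorem prod_X_add_C_mem_risingCone (s : Finset ℤ) (hs : ∀ x ∈ s, 1 ≤ x) :
    ∏ x ∈ s, (X + C (x : R)) ∈ risingCone R #s := by
  induction s using Finset.induction_on_max with
  | empty => exact risingProd_mem_risingCone le_rfl
  | insert a s hlt ih =>
    have has : a ∉ s := fun h => lt_irrefl a (hlt a h)
    have hcard : (#s : ℤ) + 1 ≤ a := by
      have := card_le_card fun x hx => mem_Ico.mpr ⟨hs x (mem_insert_of_mem hx), hlt x hx⟩
      rw [Int.card_Ico] at this
      have := hs a (mem_insert_self a s)
      omega
    rw [prod_insert has, card_insert_of_notMem has]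
    refine X_add_C_mul_mem_risingCone_succ ?_ (ih fun x hx => hs x (mem_insert_of_mem hx))
    exact_mod_cast Int.cast_mono hcard

end OrderedCommRing

end Polynomial

/-- Any polynomial `f ∈ ℚ[s]` of degree `r` with `r` distinct negative integer roots and
positive leading coefficient, i.e. `f = c·∏_{i}(X + a_i)` with `c > 0` and pairwise
distinct integers `a_i ≥ 1`, is a nonnegative `ℚ`-linear combination of the binomial
polynomials `C(s+k, k) = (s+1)(s+2)⋯(s+k)/k!` for `0 ≤ k ≤ r`. -/
theorem nonneg_combination_of_binomial_polynomials
    (r : ℕ) (f : Polynomial ℚ) (c : ℚ) (hc : 0 < c)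
    (a : Fin r → ℤ) (ha : Function.Injective a) (hpos : ∀ i, 1 ≤ a i)
    (hf : f = Polynomial.C c * ∏ i, (Polynomial.X + Polynomial.C ((a i : ℚ)))) :
    ∃ d : Fin (r + 1) → ℚ, (∀ k, 0 ≤ d k) ∧
      f = ∑ k : Fin (r + 1), Polynomial.C (d k) *
        ((Nat.factorial k : ℚ)⁻¹ •
          ∏ t ∈ Finset.range k, (Polynomial.X + Polynomial.C ((t : ℚ) + 1))) := by
  have hprod : ∏ i, (X + C (a i : ℚ)) ∈ risingCone ℚ r := by
    have := prod_X_add_C_mem_risingCone (R := ℚ) (univ.image a) (by simpa using hpos)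
    rwa [prod_image fun i _ j _ h => ha h, card_image_of_injective _ ha, card_univ,
      Fintype.card_fin] at this
  have hfmem : f ∈ risingCone ℚ r := by
    rw [hf, ← smul_eq_C_mul]
    exact PointedCone.smul_mem _ hc.le hprod
  obtain ⟨e, he⟩ := (Submodule.mem_span_range_iff_exists_fun _).mp hfmem
  refine ⟨fun k => (k.val.factorial : ℚ) * e k, fun k => mul_nonneg (by positivity) (e k).2, ?_⟩
  rw [← he]
  refine sum_congr rfl fun k _ => ?_
  rw [← Nonneg.coe_smul, smul_eq_C_mul, smul_eq_C_mul, ← mul_assoc, ← C_mul, risingProd]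
  field_simp
end

section
/- A polynomial q ∈ ℚ[s] of degree n-1 that takes nonnegative values at all nonnegative integers and has n-1 distinct integer roots, all nonnegative, must have its nonnegative roots occurring in consecutive pairs: if a ≥ 1 is a root then exactly one of a-1, a+1 is also a root (when the root multiplicities are all one), except that 0 may appear as an unpaired root only when the number of nonnegative roots is odd. -/
/-!
At a nonnegative integer `j` that is not a root, `q j = c ∏ (j - aᵢ)` is nonzero, hence positive,
so the number of roots above `j` is even. A finite set `S ⊆ ℕ` with an even number of elements above
each non-member splits into consecutive pairs: the element `x ∈ S` with an odd number of elements
of `S` above it is followed by `x + 1 ∈ S`, which has an even number above it, and conversely each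
`x + 1 ∈ S` with an even number above is preceded by such an `x`. Only `0` can be left over.
-/

open Finset

theorem prod_sub_pos_iff_even_card_filter_lt {ι R : Type*} [CommRing R] [LinearOrder R]
    [IsStrictOrderedRing R] (s : Finset ι) (a : ι → R) (y : R) (hy : ∀ i ∈ s, a i ≠ y) :
    0 < ∏ i ∈ s, (y - a i) ↔ Even #(s.filter (y < a ·)) := by
  have hbelow : 0 < ∏ i ∈ s.filter (¬ y < a ·), (y - a i) :=
    prod_pos fun i hi => by
      obtain ⟨hi, hle⟩ := mem_filter.1 hi
      exact sub_pos.2 ((not_lt.1 hle).lt_of_ne (hy i hi))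
  have habove : 0 < ∏ i ∈ s.filter (y < a ·), (a i - y) :=
    prod_pos fun i hi => sub_pos.2 (mem_filter.1 hi).2
  have hflip : ∏ i ∈ s.filter (y < a ·), (y - a i)
      = (-1) ^ #(s.filter (y < a ·)) * ∏ i ∈ s.filter (y < a ·), (a i - y) := by
    rw [← prod_const, ← prod_mul_distrib]
    exact prod_congr rfl fun i _ => by ring
  rw [← prod_filter_mul_prod_filter_not s (y < a ·), hflip, mul_assoc,
    mul_pos_iff_of_pos_right (mul_pos habove hbelow)]
  rcases Nat.even_or_odd #(s.filter (y < a ·)) with h | h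
  · simp [h.neg_one_pow, h]
  · simp [h.neg_one_pow, Nat.not_even_iff_odd.2 h]

theorem Finset.card_filter_lt_eq_card_filter_succ_lt_add (S : Finset ℕ) (x : ℕ) :
    #(S.filter (x < ·)) = #(S.filter (x + 1 < ·)) + if x + 1 ∈ S then 1 else 0 := by
  have hsplit : S.filter (x < ·) = S.filter (x + 1 < ·) ∪ S.filter (· = x + 1) := by
    rw [← filter_or]
    exact filter_congr fun y _ => by omega
  rw [hsplit, card_union_of_disjoint (disjoint_filter.2 fun y _ h => by omega), filter_eq']
  split_ifs <;> simp

theorem exists_consecutive_pairs_of_even_card_filter_lt (S : Finset ℕ)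
    (hS : ∀ j ∉ S, Even #(S.filter (j < ·))) :
    ∃ B : Finset ℕ,
      (S = B ∪ B.image (· + 1) ∧ #S = 2 * #B) ∨
      (S = insert 0 (B ∪ B.image (· + 1)) ∧ 0 ∉ B ∧ #S = 2 * #B + 1) := by
  set B := S.filter fun x => Odd #(S.filter (x < ·))
  have hstep := S.card_filter_lt_eq_card_filter_succ_lt_add
  have hB_sub : B ⊆ S := filter_subset _ _
  have hsucc_mem : ∀ x ∈ B, x + 1 ∈ S := by
    intro x hx
    by_contra hx1
    have := (mem_filter.1 hx).2
    rw [hstep, if_neg hx1, add_zero] at this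
    exact Nat.not_even_iff_odd.2 this (hS _ hx1)
  have hsucc_not_mem : ∀ x ∈ B, x + 1 ∉ B := by
    intro x hx hx1
    have := (mem_filter.1 hx).2
    rw [hstep, if_pos (hsucc_mem x hx)] at this
    exact Nat.not_even_iff_odd.2 (mem_filter.1 hx1).2 (by simpa [Nat.odd_add_one] using this)
  have hpred_mem : ∀ y, y + 1 ∈ S → y + 1 ∉ B → y ∈ B := by
    intro y hy hyB
    have hodd : Odd #(S.filter (y < ·)) := by
      rw [hstep, if_pos hy, Nat.odd_add_one, Nat.not_odd_iff_even]
      simpa [B, hy] using hyB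
    refine mem_filter.2 ⟨?_, hodd⟩
    by_contra hyS
    exact Nat.not_even_iff_odd.2 hodd (hS y hyS)
  have hmem : ∀ x, x ∈ S ↔ x ∈ B ∨ x ∈ B.image (· + 1) ∨ (x = 0 ∧ 0 ∈ S ∧ 0 ∉ B) := by
    intro x
    constructor
    · intro hx
      by_cases hxB : x ∈ B
      · exact Or.inl hxB
      · obtain _ | y := x
        · exact Or.inr (Or.inr ⟨rfl, hx, hxB⟩)
        · exact Or.inr (Or.inl (mem_image.2 ⟨y, hpred_mem y hx hxB, rfl⟩))
    · rintro (hx | hx | ⟨rfl, h0, -⟩)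
      · exact hB_sub hx
      · obtain ⟨y, hy, rfl⟩ := mem_image.1 hx
        exact hsucc_mem y hy
      · exact h0
  have hdisj : Disjoint B (B.image (· + 1)) := by
    rw [disjoint_right]
    rintro _ hx
    obtain ⟨y, hy, rfl⟩ := mem_image.1 hx
    exact hsucc_not_mem y hy
  have hcard : #(B ∪ B.image (· + 1)) = 2 * #B := by
    rw [card_union_of_disjoint hdisj, card_image_of_injective _ (add_left_injective 1)]
    ring
  refine ⟨B, ?_⟩
  by_cases h0 : 0 ∈ S ∧ 0 ∉ B
  · have hS_eq : S = insert 0 (B ∪ B.image (· + 1)) := by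
      ext x
      rw [hmem, mem_insert, mem_union]
      tauto
    refine Or.inr ⟨hS_eq, h0.2, ?_⟩
    rw [hS_eq, card_insert_of_notMem (by simp [h0.2]), hcard]
  · have hS_eq : S = B ∪ B.image (· + 1) := by
      ext x
      rw [hmem, mem_union]
      tauto
    exact Or.inl ⟨hS_eq, hS_eq ▸ hcard⟩

/-- A polynomial `q ∈ ℝ[s]` with positive leading coefficient whose roots are distinct
nonnegative integers, and which takes nonnegative values at all nonnegative integers,
has its roots occurring in consecutive pairs `{b, b+1}`, together possibly with the
unpaired root `0` (the latter happening exactly when the number of roots is odd). -/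
theorem nonneg_on_naturals_roots_in_consecutive_pairs
    (r : ℕ) (c : ℝ) (hc : 0 < c) (a : Fin r → ℕ) (ha : Function.Injective a)
    (q : Polynomial ℝ)
    (hq : q = Polynomial.C c * ∏ i, (Polynomial.X - Polynomial.C ((a i : ℝ))))
    (hnn : ∀ j : ℕ, 0 ≤ q.eval (j : ℝ)) :
    ∃ B : Finset ℕ,
      (Finset.image a Finset.univ = B ∪ B.image (· + 1) ∧ r = 2 * B.card) ∨
      (Finset.image a Finset.univ = insert 0 (B ∪ B.image (· + 1)) ∧ 0 ∉ B ∧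
        r = 2 * B.card + 1) := by
  set S := image a univ
  have hcard : #S = r := by simp [S, card_image_of_injective _ ha]
  have heval : ∀ j : ℕ, q.eval (j : ℝ) = c * ∏ x ∈ S, ((j : ℝ) - x) := fun j => by
    simp [hq, Polynomial.eval_prod, S, prod_image ha.injOn]
  have hparity : ∀ j ∉ S, Even #(S.filter (j < ·)) := by
    intro j hj
    have hroot : ∀ x ∈ S, (x : ℝ) ≠ j := fun x hx => by
      exact_mod_cast ne_of_mem_of_not_mem hx hj
    have hpos : 0 < c * ∏ x ∈ S, ((j : ℝ) - x) :=
      (heval j ▸ hnn j).lt_of_ne' (mul_ne_zero hc.ne' (prod_ne_zero_iff.2 fun x hx =>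
        sub_ne_zero.2 (hroot x hx).symm))
    simpa using (prod_sub_pos_iff_even_card_filter_lt S (Nat.cast : ℕ → ℝ) j hroot).1
      (pos_of_mul_pos_right hpos hc.le)
  obtain ⟨B, hB⟩ := exists_consecutive_pairs_of_even_card_filter_lt S hparity
  exact ⟨B, hcard ▸ hB⟩
end
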